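/- Let ω ∈ ℕ, let w : ℝ^d → ℂ be smooth with w(0) ≠ 0, and let (a^α)_{|α| ≤ ω} and (c^α)_{|α| ≤ ω} be families of complex numbers indexed by multi-indices of order at most ω. Then the identity Σ_{|α| ≤ ω} (a^α/α!) ∂^α f(0) = Σ_{|α| ≤ ω} (c^α/α!) ∂^α(f/w)(0) holds for every smooth function f : ℝ^d → ℂ if and only if a^β = Σ_{|μ| ≤ ω−|β|} (c^{β+μ}/μ!) ∂^μ(1/w)(0) for every multi-index β with |β| ≤ ω. (Change between the two parametrizations of the renormalization constants of an extension.) -/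

import Mathlib

noncomputable section

/-- Partial derivative `∂_i` of a complex-valued function on `ℝ^d = (Fin d → ℝ)`. -/
def pd {d : ℕ} (i : Fin d) (f : (Fin d → ℝ) → ℂ) : (Fin d → ℝ) → ℂ :=
  fun x => fderiv ℝ f x (Pi.single i 1)

/-- Multi-index partial derivative `∂^α = ∏_i ∂_i^{α_i}`. -/
def mpd {d : ℕ} (α : Fin d → ℕ) (f : (Fin d → ℝ) → ℂ) : (Fin d → ℝ) → ℂ :=
  Fin.foldr d (fun i g => (pd i)^[α i] g) f

/-- Monomial `x^α = ∏_i x_i^{α_i}`. -/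
def mono {d : ℕ} (α : Fin d → ℕ) (x : Fin d → ℝ) : ℂ := ∏ i, (x i : ℂ) ^ α i

/-- Multi-index factorial `α! = ∏_i α_i!`. -/
def mfact {d : ℕ} (α : Fin d → ℕ) : ℕ := ∏ i, Nat.factorial (α i)

/-- Order `|α| = Σ_i α_i` of a multi-index. -/
def morder {d : ℕ} (α : Fin d → ℕ) : ℕ := ∑ i, α i

/-- The finite set of multi-indices `α` with `|α| ≤ ω`. -/
def midx (d ω : ℕ) : Finset (Fin d → ℕ) :=
  (Fintype.piFinset fun _ : Fin d => Finset.range (ω + 1)).filter fun α => morder α ≤ ω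

/-- The subtraction operator
`(W_ω^w f)(x) = f(x) − w(x) Σ_{|α| ≤ ω} (x^α/α!) ∂^α(f/w)(0)`. -/
def Wop {d : ℕ} (ω : ℕ) (w f : (Fin d → ℝ) → ℂ) : (Fin d → ℝ) → ℂ :=
  fun x => f x - w x * ∑ α ∈ midx d ω, mono α x / (mfact α : ℂ) * mpd α (fun y => f y / w y) 0



open Filter Topology

namespace Renorm

variable {d : ℕ}

/-- smoothness -/
abbrev SM (f : (Fin d → ℝ) → ℂ) : Prop := ContDiff ℝ ((⊤ : ℕ∞) : WithTop ℕ∞) f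

lemma pd_contDiff {i : Fin d} {f : (Fin d → ℝ) → ℂ} (hf : SM f) : SM (pd i f) :=
  (hf.fderiv_right (le_refl _)).clm_apply contDiff_const

lemma SM.diffAt {f : (Fin d → ℝ) → ℂ} (hf : SM f) {x : Fin d → ℝ} :
    DifferentiableAt ℝ f x := (hf.differentiable (by simp)).differentiableAt

lemma pd_add {i : Fin d} {f g : (Fin d → ℝ) → ℂ} (hf : SM f) (hg : SM g) :
    pd i (fun x => f x + g x) = fun x => pd i f x + pd i g x := by
  funext x
  simp only [pd, fderiv_fun_add hf.diffAt hg.diffAt, ContinuousLinearMap.add_apply]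

lemma pd_const_mul {i : Fin d} {f : (Fin d → ℝ) → ℂ} (hf : SM f) (c : ℂ) :
    pd i (fun x => c * f x) = fun x => c * pd i f x := by
  funext x
  simp only [pd, fderiv_const_mul hf.diffAt, ContinuousLinearMap.smul_apply, smul_eq_mul]

lemma pd_mul {i : Fin d} {f g : (Fin d → ℝ) → ℂ} (hf : SM f) (hg : SM g) :
    pd i (fun x => f x * g x) = fun x => pd i f x * g x + f x * pd i g x := by
  funext x
  simp only [pd, fderiv_fun_mul hf.diffAt hg.diffAt, ContinuousLinearMap.add_apply,
    ContinuousLinearMap.smul_apply, smul_eq_mul]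
  ring

lemma pd_congr_ev {i : Fin d} {f g : (Fin d → ℝ) → ℂ} {x : Fin d → ℝ}
    (h : f =ᶠ[𝓝 x] g) : pd i f =ᶠ[𝓝 x] pd i g := by
  filter_upwards [eventually_eventuallyEq_nhds.2 h] with y hy
  simp only [pd, hy.fderiv_eq]

lemma pd_comm {i j : Fin d} {f : (Fin d → ℝ) → ℂ} (hf : SM f) (x : Fin d → ℝ) :
    pd i (pd j f) x = pd j (pd i f) x := by
  have hder : ContDiff ℝ ((⊤ : ℕ∞) : WithTop ℕ∞) (fderiv ℝ f) := hf.fderiv_right (le_refl _)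
  have h1 : ∀ (k : Fin d) (v : Fin d → ℝ), pd k (fun y => fderiv ℝ f y v) x
      = fderiv ℝ (fderiv ℝ f) x (Pi.single k 1) v := by
    intro k v
    have : fderiv ℝ (fun y => (fderiv ℝ f y) ((fun _ => v) y)) x
        = ((fderiv ℝ f x).comp (fderiv ℝ (fun _ => v) x)) +
          (fderiv ℝ (fderiv ℝ f) x).flip v :=
      fderiv_clm_apply (hder.differentiable (by simp)).differentiableAt (differentiableAt_const v)
    simp only [pd]
    rw [show (fun y => fderiv ℝ f y v) = (fun y => (fderiv ℝ f y) ((fun _ => v) y)) from rfl,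
      this]
    simp [fderiv_const]
  have hsym : ∀ v u, fderiv ℝ (fderiv ℝ f) x v u = fderiv ℝ (fderiv ℝ f) x u v := by
    intro v u
    exact (hf.contDiffAt.isSymmSndFDerivAt (by
      rw [show (2 : WithTop ℕ∞) = ((2:ℕ∞) : WithTop ℕ∞) from rfl]
      rw [minSmoothness_of_isRCLikeNormedField]
      exact WithTop.coe_le_coe.2 le_top)).eq v u
  show pd i (fun y => fderiv ℝ f y (Pi.single j 1)) x = pd j (fun y => fderiv ℝ f y (Pi.single i 1)) x
  rw [h1, h1, hsym]


/-- Iterated derivative along a list of directions. -/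
def Dl (l : List (Fin d)) (f : (Fin d → ℝ) → ℂ) : (Fin d → ℝ) → ℂ := l.foldr pd f

/-- the canonical list of a multi-index -/
def lst (α : Fin d → ℕ) : List (Fin d) :=
  (List.finRange d).flatMap fun i => List.replicate (α i) i

@[simp] lemma Dl_nil (f : (Fin d → ℝ) → ℂ) : Dl [] f = f := rfl
@[simp] lemma Dl_cons (i : Fin d) (l : List (Fin d)) (f : (Fin d → ℝ) → ℂ) :
    Dl (i :: l) f = pd i (Dl l f) := rfl

lemma Dl_append (l₁ l₂ : List (Fin d)) (f : (Fin d → ℝ) → ℂ) :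
    Dl (l₁ ++ l₂) f = Dl l₁ (Dl l₂ f) := List.foldr_append ..

lemma Dl_replicate (n : ℕ) (i : Fin d) (f : (Fin d → ℝ) → ℂ) :
    Dl (List.replicate n i) f = (pd i)^[n] f := by
  induction n with
  | zero => rfl
  | succ n ih =>
    rw [List.replicate_succ, Dl_cons, ih, Function.iterate_succ_apply']

lemma Dl_contDiff {l : List (Fin d)} {f : (Fin d → ℝ) → ℂ} (hf : SM f) : SM (Dl l f) := by
  induction l with
  | nil => exact hf
  | cons i l ih => exact pd_contDiff ih

lemma mpd_eq_Dl (α : Fin d → ℕ) (f : (Fin d → ℝ) → ℂ) : mpd α f = Dl (lst α) f := by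
  rw [mpd, Fin.foldr_eq_foldr_finRange, lst]
  generalize List.finRange d = l
  induction l with
  | nil => rfl
  | cons i l ih =>
    rw [List.foldr_cons, ih, List.flatMap_cons, Dl_append, Dl_replicate]

lemma count_lst (α : Fin d → ℕ) (j : Fin d) : (lst α).count j = α j := by
  have key : ∀ l : List (Fin d),
      (l.flatMap fun i => List.replicate (α i) i).count j
        = (l.map fun i => if i = j then α i else 0).sum := by
    intro l
    induction l with
    | nil => rfl
    | cons i l ih =>
      rw [List.flatMap_cons, List.count_append, ih, List.map_cons, List.sum_cons,
        List.count_replicate]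
      simp [beq_iff_eq]
  rw [lst, key, ← Fin.sum_univ_def]
  simp

lemma Dl_perm {l l' : List (Fin d)} (hp : l.Perm l') {f : (Fin d → ℝ) → ℂ} (hf : SM f) :
    Dl l f = Dl l' f := by
  induction hp with
  | nil => rfl
  | cons x h ih => rw [Dl_cons, Dl_cons, ih]
  | swap x y l =>
    show pd y (pd x (Dl l f)) = pd x (pd y (Dl l f))
    funext z
    exact pd_comm (Dl_contDiff hf) z
  | trans h1 h2 ih1 ih2 => rw [ih1, ih2]

lemma mpd_contDiff {α : Fin d → ℕ} {f : (Fin d → ℝ) → ℂ} (hf : SM f) : SM (mpd α f) := by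
  rw [mpd_eq_Dl]; exact Dl_contDiff hf

/-- peeling off one derivative (innermost) -/
lemma mpd_step {α : Fin d → ℕ} (j : Fin d) {f : (Fin d → ℝ) → ℂ} (hf : SM f) :
    mpd (α + Pi.single j 1) f = mpd α (pd j f) := by
  rw [mpd_eq_Dl, mpd_eq_Dl]
  have hperm : (lst (α + Pi.single j 1)).Perm (lst α ++ [j]) := by
    rw [List.perm_iff_count]
    intro i
    rw [List.count_append, count_lst]
    simp only [Pi.add_apply, Pi.single_apply, List.count_singleton, count_lst]
    by_cases h : i = j
    · simp [h]
    · have h2 : ¬ j = i := fun hj => h hj.symm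
      simp [if_neg h, if_neg h2, beq_iff_eq]
  rw [Dl_perm hperm hf, Dl_append]
  rfl

lemma pd_zero_fn (i : Fin d) : pd i (fun _ => (0:ℂ)) = fun _ => 0 := by
  funext x; simp [pd]

lemma mpd_zero_fn (α : Fin d → ℕ) : mpd α (fun _ => (0:ℂ)) = fun _ => 0 := by
  rw [mpd_eq_Dl]
  generalize lst α = l
  induction l with
  | nil => rfl
  | cons i l ih => rw [Dl_cons, ih, pd_zero_fn]

@[simp] lemma mpd_zero (f : (Fin d → ℝ) → ℂ) : mpd 0 f = f := by
  rw [mpd_eq_Dl]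
  have : lst (0 : Fin d → ℕ) = [] := by
    simp [lst]
  rw [this, Dl_nil]

lemma mpd_congr {α : Fin d → ℕ} {f g : (Fin d → ℝ) → ℂ} {x : Fin d → ℝ}
    (h : f =ᶠ[𝓝 x] g) : mpd α f x = mpd α g x := by
  rw [mpd_eq_Dl, mpd_eq_Dl]
  have : ∀ l : List (Fin d), Dl l f =ᶠ[𝓝 x] Dl l g := by
    intro l
    induction l with
    | nil => exact h
    | cons i l ih => exact pd_congr_ev ih
  exact (this _).self_of_nhds

lemma mpd_add {α : Fin d → ℕ} {f g : (Fin d → ℝ) → ℂ} (hf : SM f) (hg : SM g) :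
    mpd α (fun x => f x + g x) = fun x => mpd α f x + mpd α g x := by
  rw [mpd_eq_Dl, mpd_eq_Dl, mpd_eq_Dl]
  generalize lst α = l
  induction l with
  | nil => rfl
  | cons i l ih =>
    simp only [Dl_cons, ih, pd_add (Dl_contDiff hf) (Dl_contDiff hg)]

lemma mpd_const_mul {α : Fin d → ℕ} {f : (Fin d → ℝ) → ℂ} (hf : SM f) (c : ℂ) :
    mpd α (fun x => c * f x) = fun x => c * mpd α f x := by
  rw [mpd_eq_Dl, mpd_eq_Dl]
  generalize lst α = l
  induction l with
  | nil => rfl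
  | cons i l ih =>
    simp only [Dl_cons, ih, pd_const_mul (Dl_contDiff hf) c]

lemma mpd_sum {ι : Type*} {α : Fin d → ℕ} (s : Finset ι) (F : ι → (Fin d → ℝ) → ℂ)
    (hF : ∀ k ∈ s, SM (F k)) :
    mpd α (fun x => ∑ k ∈ s, F k x) = fun x => ∑ k ∈ s, mpd α (F k) x := by
  classical
  induction s using Finset.induction_on with
  | empty => simpa using mpd_zero_fn α
  | insert a s hnm ih =>
    have h1 : SM (F a) := hF a (Finset.mem_insert_self a s)
    have h2 : SM (fun x => ∑ k ∈ s, F k x) :=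
      ContDiff.sum fun k hk => hF k (Finset.mem_insert_of_mem hk)
    simp only [Finset.sum_insert hnm]
    rw [mpd_add h1 h2, ih fun k hk => hF k (Finset.mem_insert_of_mem hk)]


/-! ### multi-index utilities -/

lemma morder_add (α β : Fin d → ℕ) : morder (α + β) = morder α + morder β := by
  simp [morder, Finset.sum_add_distrib]

lemma morder_single (j : Fin d) : morder (Pi.single j 1 : Fin d → ℕ) = 1 := by
  simp [morder]

lemma morder_zero : morder (0 : Fin d → ℕ) = 0 := by simp [morder]

lemma morder_eq_zero {α : Fin d → ℕ} (h : morder α = 0) : α = 0 := by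
  funext i
  have := Finset.sum_eq_zero_iff.1 h i (Finset.mem_univ i)
  simpa using this

lemma le_morder (α : Fin d → ℕ) (i : Fin d) : α i ≤ morder α :=
  Finset.single_le_sum (fun _ _ => Nat.zero_le _) (Finset.mem_univ i)

lemma mem_midx {N : ℕ} {α : Fin d → ℕ} : α ∈ midx d N ↔ morder α ≤ N := by
  constructor
  · intro h; exact (Finset.mem_filter.1 h).2
  · intro h
    refine Finset.mem_filter.2 ⟨Fintype.mem_piFinset.2 fun i => ?_, h⟩
    exact Finset.mem_range.2 (Nat.lt_succ_of_le ((le_morder α i).trans h))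

lemma sub_single_add {α : Fin d → ℕ} {j : Fin d} (h : α j ≠ 0) :
    (α - Pi.single j 1) + Pi.single j 1 = α := by
  funext i
  by_cases hij : i = j
  · subst hij
    simp only [Pi.add_apply, Pi.sub_apply, Pi.single_eq_same]
    omega
  · simp [Pi.single_apply, hij]

lemma mfact_pos (α : Fin d → ℕ) : 0 < mfact α :=
  Finset.prod_pos fun i _ => Nat.factorial_pos (α i)

lemma mfact_cast_ne_zero (α : Fin d → ℕ) : (mfact α : ℂ) ≠ 0 := by
  exact_mod_cast (mfact_pos α).ne'

lemma mfact_sub_single {β : Fin d → ℕ} {j : Fin d} (h : β j ≠ 0) :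
    mfact β = β j * mfact (β - Pi.single j 1) := by
  have h1 : mfact (β - Pi.single j 1)
      = (β j - 1).factorial * ∏ i ∈ Finset.univ.erase j, (β i).factorial := by
    unfold mfact
    rw [← Finset.mul_prod_erase Finset.univ _ (Finset.mem_univ j)]
    congr 1
    · simp
    · exact Finset.prod_congr rfl fun i hi => by
        simp [Pi.single_apply, (Finset.mem_erase.1 hi).1]
  rw [h1, ← mul_assoc, Nat.mul_factorial_pred h]
  unfold mfact
  exact (Finset.mul_prod_erase Finset.univ _ (Finset.mem_univ j)).symm

/-! ### monomials -/

lemma mono_contDiff_omega (β : Fin d → ℕ) : ContDiff ℝ (⊤ : ℕ∞) (mono β) := by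
  have : ∀ s : Finset (Fin d), ContDiff ℝ (⊤ : ℕ∞) fun x : Fin d → ℝ => ∏ i ∈ s, (x i : ℂ) ^ β i := by
    intro s
    classical
    induction s using Finset.induction_on with
    | empty => simpa using contDiff_const
    | insert a s hnm ih =>
      have hfac : ContDiff ℝ (⊤ : ℕ∞) fun x : Fin d → ℝ => ((x a : ℂ)) ^ β a := by
        exact (Complex.ofRealCLM.contDiff.comp ((ContinuousLinearMap.proj a : (Fin d → ℝ) →L[ℝ] ℝ)).contDiff).pow (β a)
      simpa [Finset.prod_insert hnm] using hfac.mul ih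
  exact this Finset.univ

lemma mono_contDiff (β : Fin d → ℕ) : SM (mono β) := (mono_contDiff_omega β).of_le (by simp)

lemma mono_mul (β μ : Fin d → ℕ) (x : Fin d → ℝ) :
    mono β x * mono μ x = mono (β + μ) x := by
  simp [mono, pow_add, ← Finset.prod_mul_distrib]

lemma mono_at_zero (β : Fin d → ℕ) : mono β 0 = if β = 0 then 1 else 0 := by
  by_cases h : β = 0
  · simp [h, mono]
  · rw [if_neg h]
    obtain ⟨j, hj⟩ : ∃ j, β j ≠ 0 := by
      by_contra hc
      push_neg at hc
      exact h (funext fun i => hc i)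
    apply Finset.prod_eq_zero (Finset.mem_univ j)
    simp [zero_pow hj]

lemma pd_mono (j : Fin d) (β : Fin d → ℕ) :
    pd j (mono β) = fun x => (β j : ℂ) * mono (β - Pi.single j 1) x := by
  funext x
  have hfac : ∀ i : Fin d, HasFDerivAt (fun x : Fin d → ℝ => ((x i : ℂ)) ^ β i)
      ((((β i : ℂ)) * ((x i : ℂ)) ^ (β i - 1)) •
        (Complex.ofRealCLM.comp (ContinuousLinearMap.proj i))) x := by
    intro i
    exact (hasDerivAt_pow (β i) ((x i : ℂ))).comp_hasFDerivAt x
      (Complex.ofRealCLM.comp (ContinuousLinearMap.proj i :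
        (Fin d → ℝ) →L[ℝ] ℝ)).hasFDerivAt
  have H := HasFDerivAt.finset_prod (u := Finset.univ) (fun i _ => hfac i)
  have hfd : fderiv ℝ (mono β) x = ∑ i, (∏ l ∈ Finset.univ.erase i, ((x l : ℂ)) ^ β l) •
      ((((β i : ℂ)) * ((x i : ℂ)) ^ (β i - 1)) •
        (Complex.ofRealCLM.comp (ContinuousLinearMap.proj i))) := H.fderiv
  show fderiv ℝ (mono β) x (Pi.single j 1) = _
  rw [hfd]
  rw [ContinuousLinearMap.sum_apply]
  rw [Finset.sum_eq_single j]
  · simp only [ContinuousLinearMap.smul_apply, ContinuousLinearMap.coe_comp', Function.comp_apply,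
      ContinuousLinearMap.proj_apply, Pi.single_eq_same, smul_eq_mul]
    rw [show Complex.ofRealCLM (1:ℝ) = 1 by simp]
    rw [show mono (β - Pi.single j 1) x
        = ((x j : ℂ)) ^ (β j - 1) * ∏ l ∈ Finset.univ.erase j, ((x l : ℂ)) ^ β l by
      unfold mono
      rw [← Finset.mul_prod_erase Finset.univ _ (Finset.mem_univ j)]
      congr 1
      · simp
      · apply Finset.prod_congr rfl
        intro i hi
        have hij : i ≠ j := (Finset.mem_erase.1 hi).1
        simp [Pi.single_apply, hij]]
    ring
  · intro i _ hij
    simp only [ContinuousLinearMap.smul_apply, ContinuousLinearMap.coe_comp', Function.comp_apply,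
      ContinuousLinearMap.proj_apply, smul_eq_mul]
    rw [Pi.single_eq_of_ne hij]
    simp
  · intro h
    exact absurd (Finset.mem_univ j) h

/-- derivative of monomials at 0 -/
lemma mpd_mono (α β : Fin d → ℕ) :
    mpd α (mono β) 0 = if α = β then (mfact β : ℂ) else 0 := by
  suffices H : ∀ (n : ℕ) (α β : Fin d → ℕ), morder α = n →
      mpd α (mono β) 0 = if α = β then (mfact β : ℂ) else 0 from H (morder α) α β rfl
  intro n
  induction n with
  | zero =>
    intro α β h
    have hα := morder_eq_zero h
    subst hα
    rw [mpd_zero, mono_at_zero]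
    by_cases hb : β = 0
    · simp [hb, eq_comm, mfact]
    · simp [hb, Ne.symm hb]
  | succ n ih =>
    intro α β h
    obtain ⟨j, hj⟩ : ∃ j, α j ≠ 0 := by
      by_contra hc
      push_neg at hc
      rw [funext fun i => hc i] at h
      rw [show morder (fun _ => 0 : Fin d → ℕ) = 0 from by simp [morder]] at h
      omega
    set α' := α - Pi.single j 1 with hα'
    have hαdec : α' + Pi.single j 1 = α := sub_single_add hj
    have hmo : morder α' = n := by
      have := morder_add α' (Pi.single j 1)
      rw [hαdec, morder_single, h] at this
      omega
    rw [← hαdec, mpd_step j (mono_contDiff β), pd_mono, mpd_const_mul (mono_contDiff _)]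
    simp only [ih α' (β - Pi.single j 1) hmo]
    by_cases hbj : β j = 0
    · have hne : α' + Pi.single j 1 ≠ β := by
        rw [hαdec]
        intro hc
        exact hj (by rw [hc]; exact hbj)
      simp [hbj, if_neg hne]
    · have hβdec : (β - Pi.single j 1) + Pi.single j 1 = β := sub_single_add hbj
      by_cases hab : α' = β - Pi.single j 1
      · rw [if_pos hab, if_pos (by rw [hab, hβdec])]
        rw [mfact_sub_single hbj]
        push_cast
        ring
      · rw [if_neg hab, mul_zero, if_neg]
        intro hc
        apply hab
        have : α' + Pi.single j 1 - Pi.single j 1 = β - Pi.single j 1 := by rw [hc]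
        simpa using this

/-- If all derivatives of `f` up to order `n` vanish at `0`, so do those of `f * h`. -/
lemma vanish : ∀ (n : ℕ) (f h : (Fin d → ℝ) → ℂ), SM f → SM h →
    (∀ γ : Fin d → ℕ, morder γ ≤ n → mpd γ f 0 = 0) →
    ∀ α : Fin d → ℕ, morder α ≤ n → mpd α (fun x => f x * h x) 0 = 0 := by
  intro n
  induction n with
  | zero =>
    intro f h hf hh hvan α hα
    have hα0 : α = 0 := morder_eq_zero (Nat.le_zero.1 hα)
    subst hα0
    rw [mpd_zero]
    have : f 0 = 0 := by
      have := hvan 0 (by rw [morder_zero])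
      rwa [mpd_zero] at this
    simp [this]
  | succ n ih =>
    intro f h hf hh hvan α hα
    by_cases hα0 : α = 0
    · subst hα0
      rw [mpd_zero]
      have : f 0 = 0 := by
        have := hvan 0 (by rw [morder_zero]; omega)
        rwa [mpd_zero] at this
      simp [this]
    · obtain ⟨j, hj⟩ : ∃ j, α j ≠ 0 := by
        by_contra hc
        push_neg at hc
        exact hα0 (funext fun i => hc i)
      set α' := α - Pi.single j 1 with hα'def
      have hαdec : α' + Pi.single j 1 = α := sub_single_add hj
      have hmo : morder α' + 1 = morder α := by
        conv_rhs => rw [← hαdec]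
        rw [morder_add, morder_single]
      have hmo' : morder α' ≤ n := by omega
      rw [← hαdec, mpd_step j (hf.mul hh), pd_mul hf hh,
        mpd_add ((pd_contDiff hf).mul hh) (hf.mul (pd_contDiff hh))]
      have T1 : mpd α' (fun x => pd j f x * h x) 0 = 0 := by
        apply ih (pd j f) h (pd_contDiff hf) hh _ α' hmo'
        intro γ hγ
        have : mpd (γ + Pi.single j 1) f 0 = 0 := by
          apply hvan
          rw [morder_add, morder_single]
          omega
        rwa [mpd_step j hf] at this
      have T2 : mpd α' (fun x => f x * pd j h x) 0 = 0 := by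
        apply ih f (pd j h) hf (pd_contDiff hh) _ α' hmo'
        intro γ hγ
        exact hvan γ (by omega)
      simp [T1, T2]

/-- The Taylor remainder of a smooth function is flat at `0`. -/
lemma taylor_flat (g : (Fin d → ℝ) → ℂ) (hg : SM g) (N : ℕ) :
    ∀ γ : Fin d → ℕ, morder γ ≤ N →
      mpd γ (fun x => g x + (-1 : ℂ) *
        ∑ β ∈ midx d N, (mpd β g 0 / (mfact β : ℂ)) * mono β x) 0 = 0 := by
  intro γ hγ
  have hP : SM (fun x : Fin d → ℝ =>
      ∑ β ∈ midx d N, (mpd β g 0 / (mfact β : ℂ)) * mono β x) :=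
    ContDiff.sum fun β _ => contDiff_const.mul (mono_contDiff β)
  rw [mpd_add hg (contDiff_const.mul hP)]
  simp only
  rw [mpd_const_mul hP]
  simp only
  rw [mpd_sum (midx d N) (fun β => fun x => (mpd β g 0 / (mfact β : ℂ)) * mono β x)
    (fun β _ => contDiff_const.mul (mono_contDiff β))]
  simp only
  have : ∀ β ∈ midx d N,
      mpd γ (fun x => (mpd β g 0 / (mfact β : ℂ)) * mono β x) 0
        = (mpd β g 0 / (mfact β : ℂ)) * (if γ = β then (mfact β : ℂ) else 0) := by
    intro β _
    rw [mpd_const_mul (mono_contDiff β)]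
    simp only
    rw [mpd_mono]
  rw [Finset.sum_congr rfl this]
  rw [Finset.sum_eq_single_of_mem γ (mem_midx.2 hγ)]
  · rw [if_pos rfl, div_mul_cancel₀ _ (mfact_cast_ne_zero γ)]
    ring
  · intro β _ hβ
    rw [if_neg (Ne.symm hβ), mul_zero]

/-- Stage 2: expansion of `mono β * h`. -/
lemma stage2 (N : ℕ) (β : Fin d → ℕ) (h : (Fin d → ℝ) → ℂ) (hh : SM h)
    (α : Fin d → ℕ) (hα : morder α ≤ N) :
    mpd α (fun x => mono β x * h x) 0
      = ∑ μ ∈ midx d N, (mpd μ h 0 / (mfact μ : ℂ)) *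
          (if α = β + μ then (mfact α : ℂ) else 0) := by
  set Q : (Fin d → ℝ) → ℂ :=
    fun x => ∑ μ ∈ midx d N, (mpd μ h 0 / (mfact μ : ℂ)) * mono μ x with hQdef
  have hQ : SM Q := ContDiff.sum fun μ _ => contDiff_const.mul (mono_contDiff μ)
  have hsplit : (fun x => mono β x * h x)
      = fun x => (∑ μ ∈ midx d N, (mpd μ h 0 / (mfact μ : ℂ)) * mono (β + μ) x)
          + (h x + (-1:ℂ) * Q x) * mono β x := by
    funext x
    have : (∑ μ ∈ midx d N, (mpd μ h 0 / (mfact μ : ℂ)) * mono (β + μ) x)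
        = mono β x * Q x := by
      rw [hQdef, Finset.mul_sum]
      apply Finset.sum_congr rfl
      intro μ _
      rw [← mono_mul]
      ring
    rw [this]
    ring
  rw [hsplit]
  have hS : SM (fun x => h x + (-1:ℂ) * Q x) := hh.add (contDiff_const.mul hQ)
  have hsum : SM (fun x : Fin d → ℝ =>
      ∑ μ ∈ midx d N, (mpd μ h 0 / (mfact μ : ℂ)) * mono (β + μ) x) :=
    ContDiff.sum fun μ _ => contDiff_const.mul (mono_contDiff (β + μ))
  rw [mpd_add hsum (hS.mul (mono_contDiff β))]
  simp only
  have hvan : mpd α (fun x => (h x + (-1:ℂ) * Q x) * mono β x) 0 = 0 :=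
    vanish N _ (mono β) hS (mono_contDiff β) (taylor_flat h hh N) α hα
  rw [hvan, add_zero]
  rw [mpd_sum (midx d N) (fun μ => fun x => (mpd μ h 0 / (mfact μ : ℂ)) * mono (β + μ) x)
    (fun μ _ => contDiff_const.mul (mono_contDiff (β + μ)))]
  simp only
  apply Finset.sum_congr rfl
  intro μ _
  rw [mpd_const_mul (mono_contDiff (β + μ))]
  simp only
  rw [mpd_mono]
  congr 1
  split_ifs with hcase
  · rw [hcase]
  · rfl

/-- Stage 1: expansion of `f * h` in terms of the Taylor coefficients of `f`. -/
lemma stage1 (N : ℕ) (f h : (Fin d → ℝ) → ℂ) (hf : SM f) (hh : SM h)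
    (α : Fin d → ℕ) (hα : morder α ≤ N) :
    mpd α (fun x => f x * h x) 0
      = ∑ β ∈ midx d N, (mpd β f 0 / (mfact β : ℂ)) *
          mpd α (fun x => mono β x * h x) 0 := by
  set P : (Fin d → ℝ) → ℂ :=
    fun x => ∑ β ∈ midx d N, (mpd β f 0 / (mfact β : ℂ)) * mono β x with hPdef
  have hP : SM P := ContDiff.sum fun β _ => contDiff_const.mul (mono_contDiff β)
  have hsplit : (fun x => f x * h x)
      = fun x => (∑ β ∈ midx d N, (mpd β f 0 / (mfact β : ℂ)) * (mono β x * h x))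
          + (f x + (-1:ℂ) * P x) * h x := by
    funext x
    have : (∑ β ∈ midx d N, (mpd β f 0 / (mfact β : ℂ)) * (mono β x * h x))
        = P x * h x := by
      rw [hPdef, Finset.sum_mul]
      apply Finset.sum_congr rfl
      intro β _
      ring
    rw [this]
    ring
  rw [hsplit]
  have hR : SM (fun x => f x + (-1:ℂ) * P x) := hf.add (contDiff_const.mul hP)
  have hsum : SM (fun x : Fin d → ℝ =>
      ∑ β ∈ midx d N, (mpd β f 0 / (mfact β : ℂ)) * (mono β x * h x)) :=
    ContDiff.sum fun β _ => contDiff_const.mul ((mono_contDiff β).mul hh)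
  rw [mpd_add hsum (hR.mul hh)]
  simp only
  rw [vanish N _ h hR hh (taylor_flat f hf N) α hα, add_zero]
  rw [mpd_sum (midx d N) (fun β => fun x => (mpd β f 0 / (mfact β : ℂ)) * (mono β x * h x))
    (fun β _ => contDiff_const.mul ((mono_contDiff β).mul hh))]
  simp only
  apply Finset.sum_congr rfl
  intro β _
  rw [mpd_const_mul ((mono_contDiff β).mul hh)]


/-- A globally smooth extension of `w⁻¹` near `0`. -/
lemma exists_ext (w : (Fin d → ℝ) → ℂ) (hw : ContDiff ℝ (⊤ : ℕ∞) w) (hw0 : w 0 ≠ 0) :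
    ∃ hE : (Fin d → ℝ) → ℂ, SM hE ∧ (fun y => (w y)⁻¹) =ᶠ[𝓝 (0 : Fin d → ℝ)] hE := by
  have hn : (0:ℝ) < ‖w 0‖ := norm_pos_iff.2 hw0
  let φ : ContDiffBump (w 0) := ⟨‖w 0‖/2, 3*‖w 0‖/4, by positivity, by linarith⟩
  have hwS : SM w := hw.of_le (by simp)
  refine ⟨fun y => (φ (w y) : ℂ) * (w y)⁻¹, ?_, ?_⟩
  · refine contDiff_iff_contDiffAt.2 fun y => ?_
    by_cases hy : w y = 0
    · have hev : ∀ᶠ z in 𝓝 y, ‖w z‖ < ‖w 0‖/4 := by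
        have hmem : {u : ℂ | ‖u‖ < ‖w 0‖/4} ∈ 𝓝 (w y) := by
          apply IsOpen.mem_nhds (isOpen_lt continuous_norm continuous_const)
          simp only [Set.mem_setOf_eq, hy, norm_zero]
          positivity
        exact (hw.continuous.continuousAt).eventually_mem hmem
      apply ContDiffAt.congr_of_eventuallyEq (contDiffAt_const (c := (0:ℂ)))
      filter_upwards [hev] with z hz
      have hφ : φ (w z) = 0 := by
        apply φ.zero_of_le_dist
        have h1 : ‖w 0‖ - ‖w z‖ ≤ ‖w 0 - w z‖ := norm_sub_norm_le _ _
        have : dist (w z) (w 0) = ‖w 0 - w z‖ := by rw [dist_eq_norm, norm_sub_rev]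
        rw [this]
        show 3*‖w 0‖/4 ≤ _
        linarith
      simp [hφ]
    · have h1 : ContDiffAt ℝ ((⊤ : ℕ∞) : WithTop ℕ∞) (fun z => ((φ (w z) : ℝ) : ℂ)) y :=
        (Complex.ofRealCLM.contDiff.comp (φ.contDiff.comp hwS)).contDiffAt
      have h2 : ContDiffAt ℝ ((⊤ : ℕ∞) : WithTop ℕ∞) (fun z => (w z)⁻¹) y :=
        hwS.contDiffAt.inv hy
      exact h1.mul h2
  · have hOO : ∀ᶠ y in 𝓝 (0 : Fin d → ℝ), dist (w y) (w 0) ≤ ‖w 0‖/2 := by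
      have hmem : Metric.closedBall (w 0) (‖w 0‖/2) ∈ 𝓝 (w 0) :=
        Metric.closedBall_mem_nhds (w 0) (by positivity)
      exact (hw.continuous.continuousAt (x := (0 : Fin d → ℝ))).eventually_mem hmem
    filter_upwards [hOO] with y hy
    have hφ : φ (w y) = 1 := φ.one_of_mem_closedBall (Metric.mem_closedBall.2 hy)
    simp [hφ]

lemma sum_reindex (ω : ℕ) (β : Fin d → ℕ) (hβ : morder β ≤ ω) (G : (Fin d → ℕ) → ℂ) :
    ∑ μ ∈ midx d (ω - morder β), G μ
      = ∑ μ ∈ midx d ω, if morder (β + μ) ≤ ω then G μ else 0 := by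
  have h1 : ∀ μ : Fin d → ℕ, (morder (β + μ) ≤ ω) = (μ ∈ midx d (ω - morder β)) := by
    intro μ
    rw [eq_iff_iff, mem_midx, morder_add]
    omega
  calc ∑ μ ∈ midx d (ω - morder β), G μ
      = ∑ μ ∈ midx d ω ∩ midx d (ω - morder β), G μ := by
        rw [Finset.inter_eq_right.2
          (fun μ hμ => mem_midx.2 ((mem_midx.1 hμ).trans (Nat.sub_le _ _)))]
    _ = ∑ μ ∈ midx d ω, if μ ∈ midx d (ω - morder β) then G μ else 0 :=
        (Finset.sum_ite_mem _ _ _).symm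
    _ = _ := Finset.sum_congr rfl fun μ _ => by simp only [h1]

/-- The master computation. -/
lemma master (ω : ℕ) (w : (Fin d → ℝ) → ℂ) (hw : ContDiff ℝ (⊤ : ℕ∞) w) (hw0 : w 0 ≠ 0)
    (c : (Fin d → ℕ) → ℂ) (f : (Fin d → ℝ) → ℂ) (hf : SM f) :
    ∑ α ∈ midx d ω, c α / (mfact α : ℂ) * mpd α (fun y => f y / w y) 0
      = ∑ β ∈ midx d ω, (mpd β f 0 / (mfact β : ℂ)) *
          (∑ μ ∈ midx d (ω - morder β),
            c (β + μ) / (mfact μ : ℂ) * mpd μ (fun y => (w y)⁻¹) 0) := by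
  obtain ⟨hE, hEsm, hEev⟩ := exists_ext w hw hw0
  have hinv : ∀ μ : Fin d → ℕ, mpd μ (fun y => (w y)⁻¹) 0 = mpd μ hE 0 :=
    fun μ => mpd_congr hEev
  have key : ∀ α ∈ midx d ω, mpd α (fun y => f y / w y) 0
      = ∑ β ∈ midx d ω, (mpd β f 0 / (mfact β : ℂ)) *
          (∑ μ ∈ midx d ω, (mpd μ hE 0 / (mfact μ : ℂ)) *
            (if α = β + μ then (mfact α : ℂ) else 0)) := by
    intro α hα
    have hdiv : mpd α (fun y => f y / w y) 0 = mpd α (fun y => f y * hE y) 0 := by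
      apply mpd_congr
      filter_upwards [hEev] with y hy
      rw [div_eq_mul_inv, hy]
    rw [hdiv, stage1 ω f hE hf hEsm α (mem_midx.1 hα)]
    exact Finset.sum_congr rfl fun β _ => by
      rw [stage2 ω β hE hEsm α (mem_midx.1 hα)]
  rw [Finset.sum_congr rfl fun α hα => by rw [key α hα]]
  simp only [Finset.mul_sum]
  rw [Finset.sum_comm]
  refine Finset.sum_congr rfl fun β hβ => ?_
  rw [Finset.sum_comm]
  rw [sum_reindex ω β (mem_midx.1 hβ) _]
  refine Finset.sum_congr rfl fun μ _ => ?_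
  simp only [mul_ite, mul_zero]
  rw [Finset.sum_ite_eq' (midx d ω) (β + μ)]
  simp only [mem_midx]
  split_ifs with hc
  · rw [hinv μ]
    have hne := mfact_cast_ne_zero (β + μ)
    have hcan : ((mfact (β+μ):ℂ))⁻¹ * (mfact (β+μ):ℂ) = 1 := inv_mul_cancel₀ hne
    calc c (β + μ) / (mfact (β + μ):ℂ) * (mpd β f 0 / (mfact β:ℂ) *
            (mpd μ hE 0 / (mfact μ:ℂ) * (mfact (β + μ):ℂ)))
        = ((mfact (β+μ):ℂ)⁻¹ * (mfact (β+μ):ℂ)) * (mpd β f 0 / (mfact β:ℂ) *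
            (c (β + μ) / (mfact μ:ℂ) * mpd μ hE 0)) := by ring
      _ = mpd β f 0 / (mfact β:ℂ) * (c (β + μ) / (mfact μ:ℂ) * mpd μ hE 0) := by
          rw [hcan, one_mul]
  · rfl


end Renorm

open Renorm

/-- Change between the two parametrizations of the renormalization constants of an
extension: `Σ_{|α|≤ω} (a^α/α!) ∂^α f(0) = Σ_{|α|≤ω} (c^α/α!) ∂^α(f/w)(0)` holds for all
smooth `f` iff `a^β = Σ_{|μ| ≤ ω−|β|} (c^{β+μ}/μ!) ∂^μ(1/w)(0)` for all `|β| ≤ ω`. -/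
theorem renormalization_constants_change {d : ℕ} (ω : ℕ) (w : (Fin d → ℝ) → ℂ)
    (hw : ContDiff ℝ (⊤ : ℕ∞) w) (hw0 : w 0 ≠ 0) (a c : (Fin d → ℕ) → ℂ) :
    (∀ f : (Fin d → ℝ) → ℂ, ContDiff ℝ (⊤ : ℕ∞) f →
      ∑ α ∈ midx d ω, a α / (mfact α : ℂ) * mpd α f 0 =
        ∑ α ∈ midx d ω, c α / (mfact α : ℂ) * mpd α (fun y => f y / w y) 0) ↔
    (∀ β : Fin d → ℕ, morder β ≤ ω →
      a β = ∑ μ ∈ midx d (ω - morder β),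
        c (β + μ) / (mfact μ : ℂ) * mpd μ (fun y => (w y)⁻¹) 0) := by
  constructor
  · intro hyp β hβ
    have h1 := hyp (mono β) (mono_contDiff_omega β)
    have hL : ∑ α ∈ midx d ω, a α / (mfact α : ℂ) * mpd α (mono β) 0 = a β := by
      rw [Finset.sum_congr rfl (fun α (_ : α ∈ midx d ω) => by rw [mpd_mono α β])]
      rw [Finset.sum_congr rfl (fun α (_ : α ∈ midx d ω) =>
        show a α / (mfact α : ℂ) * (if α = β then (mfact β : ℂ) else 0)
            = if α = β then a α else 0 from by
          split_ifs with h
          · rw [h, div_mul_cancel₀ _ (mfact_cast_ne_zero β)]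
          · rw [mul_zero])]
      rw [Finset.sum_ite_eq' (midx d ω) β, if_pos (mem_midx.2 hβ)]
    rw [hL, master ω w hw hw0 c (mono β) ((mono_contDiff_omega β).of_le (by simp))] at h1
    rw [Finset.sum_congr rfl (fun β' (_ : β' ∈ midx d ω) => by rw [mpd_mono β' β])] at h1
    rw [Finset.sum_congr rfl (fun β' (_ : β' ∈ midx d ω) =>
      show (if β' = β then (mfact β : ℂ) else 0) / (mfact β' : ℂ) *
            (∑ μ ∈ midx d (ω - morder β'),
              c (β' + μ) / (mfact μ : ℂ) * mpd μ (fun y => (w y)⁻¹) 0)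
          = if β' = β then (∑ μ ∈ midx d (ω - morder β'),
              c (β' + μ) / (mfact μ : ℂ) * mpd μ (fun y => (w y)⁻¹) 0) else 0 from by
        split_ifs with h
        · rw [h, div_self (mfact_cast_ne_zero β), one_mul]
        · rw [zero_div, zero_mul])] at h1
    rw [Finset.sum_ite_eq' (midx d ω) β, if_pos (mem_midx.2 hβ)] at h1
    exact h1
  · intro hK f hf
    rw [master ω w hw hw0 c f (hf.of_le (by simp))]
    apply Finset.sum_congr rfl
    intro β hβ
    rw [hK β (mem_midx.1 hβ)]
    ring
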